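/- For any k distinct points x₁,...,x_k ∈ ℝⁿ there exists a line L in ℝⁿ such that the number m of distinct orthogonal projections of the points onto L satisfies m ≤ max{1, k-n+1}. -/

import Mathlib

open scoped RealInnerProductSpace
open Module Finset

/-! The first `min k n` points span an affine subspace of dimension less than `n`, so some unit
vector is orthogonal to it and projects all of them to a single point; the remaining `k - n`
points contribute at most `k - n` further projections. -/

section
variable {E : Type*} [NormedAddCommGroup E] [InnerProductSpace ℝ E]

theorem Submodule.exists_norm_eq_one_mem_orthogonal [FiniteDimensional ℝ E] {W : Submodule ℝ E}
    (hW : finrank ℝ W < finrank ℝ E) : ∃ u ∈ Wᗮ, ‖u‖ = 1 := by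
  have hW_ne_top : W ≠ ⊤ := by rintro rfl; simp at hW
  obtain ⟨v, hv, hv0⟩ :=
    Submodule.exists_mem_ne_zero_of_ne_bot (Submodule.orthogonal_eq_bot_iff.not.mpr hW_ne_top)
  exact ⟨‖v‖⁻¹ • v, Wᗮ.smul_mem _ hv, norm_smul_inv_norm hv0⟩

theorem finrank_vectorSpan_range_lt {ι : Type*} [Fintype ι] (p : ι → E)
    (hcard : Fintype.card ι ≤ finrank ℝ E) (hE : 0 < finrank ℝ E) :
    finrank ℝ (vectorSpan ℝ (Set.range p)) < finrank ℝ E := by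
  cases isEmpty_or_nonempty ι with
  | inl _ => rwa [Set.range_eq_empty p, vectorSpan_empty, finrank_bot]
  | inr _ =>
    obtain ⟨m, hm⟩ := Nat.exists_eq_succ_of_ne_zero (Fintype.card_ne_zero (α := ι))
    have := finrank_vectorSpan_range_le ℝ p hm
    omega

theorem exists_norm_eq_one_forall_inner_eq [FiniteDimensional ℝ E] {ι : Type*} [Fintype ι]
    (p : ι → E) (hcard : Fintype.card ι ≤ finrank ℝ E) (hE : 0 < finrank ℝ E) :
    ∃ u : E, ‖u‖ = 1 ∧ ∀ i j, ⟪u, p i⟫ = ⟪u, p j⟫ := by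
  obtain ⟨u, hu, hu1⟩ :=
    Submodule.exists_norm_eq_one_mem_orthogonal (finrank_vectorSpan_range_lt p hcard hE)
  refine ⟨u, hu1, fun i j => ?_⟩
  have hij : p i - p j ∈ vectorSpan ℝ (Set.range p) :=
    vsub_mem_vectorSpan ℝ (Set.mem_range_self i) (Set.mem_range_self j)
  rw [← sub_eq_zero, ← inner_sub_right]
  exact Submodule.inner_left_of_mem_orthogonal hij hu
end

theorem Finset.card_image_le_card_sdiff_add_one {α β : Type*} [DecidableEq α] [DecidableEq β]
    {f : α → β} {s t : Finset α} (ht : ∀ i ∈ t, ∀ j ∈ t, f i = f j) :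
    #(s.image f) ≤ #(s \ t) + 1 := by
  calc #(s.image f) ≤ #((s \ t).image f ∪ (s ∩ t).image f) := by
        rw [← image_union, sdiff_union_inter]
    _ ≤ #((s \ t).image f) + #((s ∩ t).image f) := card_union_le _ _
    _ ≤ #(s \ t) + 1 := by
        gcongr
        · exact card_image_le
        · exact card_le_one.mpr (by simp only [mem_image, mem_inter]; grind)

theorem stmt6_general {n k : ℕ} (hn : 1 ≤ n) (x : Fin k → EuclideanSpace ℝ (Fin n)) :
    ∃ u : EuclideanSpace ℝ (Fin n), ‖u‖ = 1 ∧
      (Finset.image (fun i => ⟪u, x i⟫) Finset.univ).card ≤ max 1 (k - n + 1) := by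
  let front : Finset (Fin k) := {i | i < n}
  have hfront : Fintype.card front ≤ finrank ℝ (EuclideanSpace ℝ (Fin n)) := by
    rw [Fintype.card_coe, Fin.card_filter_val_lt, finrank_euclideanSpace_fin]
    exact min_le_right _ _
  obtain ⟨u, hu, hconst⟩ :=
    exists_norm_eq_one_forall_inner_eq (fun i : front => x i) hfront (by simpa)
  refine ⟨u, hu, ?_⟩
  calc #(univ.image fun i => ⟪u, x i⟫) ≤ #(univ \ front) + 1 :=
        card_image_le_card_sdiff_add_one fun i hi j hj => hconst ⟨i, hi⟩ ⟨j, hj⟩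
    _ = k - n + 1 := by
        simp only [front, card_univ_sdiff, Fintype.card_fin, Fin.card_filter_val_lt]
        omega
    _ ≤ max 1 (k - n + 1) := le_max_right _ _

theorem stmt6 {n k : ℕ} (hn : 1 ≤ n) (x : Fin k → EuclideanSpace ℝ (Fin n))
    (hx : Function.Injective x) :
    ∃ u : EuclideanSpace ℝ (Fin n), ‖u‖ = 1 ∧
      (Finset.image (fun i => ⟪u, x i⟫) Finset.univ).card ≤ max 1 (k - n + 1) :=
  stmt6_general hn x
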